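/- Let α > 1. For every λ ∈ ℝ the improper Riemann integral F₃(λ) := lim_{R→∞} ∫_{−R}^{R} sgn(ξ) e^{−i·sgn(ξ)·π/4} e^{i(λξ + ξ|ξ|^α)} dξ exists; the function F₃ : ℝ → ℂ is continuous, and F₃(λ) → 0 as |λ| → ∞. -/

import Mathlib

/-!
For `ξ > 0` the integrand is `e^{-iπ/4} e^{iφ(ξ)}` with `φ(ξ) = λξ + ξ^{α+1}`, and its value at
`-ξ` is minus the conjugate of its value at `ξ`; so both tails of the truncated integrals are
controlled by `∫_a^b e^{iφ}`. On `[a, b]` we have `φ'' ≥ a^{α-1}`, and van der Corput's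
second-derivative test bounds that integral by `10 a^{-(α-1)/2}`, uniformly in `λ`. As `α > 1`,
the truncated integrals therefore converge uniformly in `λ`. Each of them is the Fourier
transform of a compactly supported bounded function, hence continuous and vanishing at infinity
(Riemann–Lebesgue), and both properties pass to the uniform limit.
-/

open MeasureTheory Filter Set Complex
open scoped Topology ComplexConjugate FourierTransform

section VanDerCorput

variable {φ g g' : ℝ → ℝ} {a b δ μ : ℝ}

theorem norm_integral_smul_deriv_le_of_deriv_nonneg {E : Type*} [NormedAddCommGroup E]
    [NormedSpace ℝ E] [CompleteSpace E] {u u' : ℝ → ℝ} {w w' : ℝ → E} (hab : a ≤ b)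
    (hu : ∀ ξ ∈ Icc a b, HasDerivAt u (u' ξ) ξ) (hu' : ∀ ξ ∈ Icc a b, 0 ≤ u' ξ)
    (hw : ∀ ξ ∈ Icc a b, HasDerivAt w (w' ξ) ξ) (hw' : ContinuousOn w' (Icc a b))
    (hw1 : ∀ ξ ∈ Icc a b, ‖w ξ‖ ≤ 1) :
    ‖∫ ξ in a..b, u ξ • w' ξ‖ ≤ |u b| + |u a| + (u b - u a) := by
  rw [← uIcc_of_le hab] at hu hu' hw hw' hw1
  have hu'_int : IntervalIntegrable u' volume a b :=
    intervalIntegral.intervalIntegrable_deriv_of_nonneg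
      (fun ξ hξ => (hu ξ hξ).continuousAt.continuousWithinAt)
      (fun ξ hξ => hu ξ (Ioo_subset_Icc_self hξ)) (fun ξ hξ => hu' ξ (Ioo_subset_Icc_self hξ))
  have hboundary : ∀ ξ ∈ uIcc a b, ‖u ξ • w ξ‖ ≤ |u ξ| := fun ξ hξ => by
    rw [norm_smul, Real.norm_eq_abs]
    exact mul_le_of_le_one_right (abs_nonneg _) (hw1 ξ hξ)
  have hvar : ‖∫ ξ in a..b, u' ξ • w ξ‖ ≤ u b - u a := by
    rw [← intervalIntegral.integral_eq_sub_of_hasDerivAt hu hu'_int]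
    refine intervalIntegral.norm_integral_le_of_norm_le hab (ae_of_all _ fun ξ hξ => ?_) hu'_int
    replace hξ : ξ ∈ uIcc a b := by rw [uIcc_of_le hab]; exact Ioc_subset_Icc_self hξ
    rw [norm_smul, Real.norm_of_nonneg (hu' ξ hξ)]
    exact mul_le_of_le_one_right (hu' ξ hξ) (hw1 ξ hξ)
  rw [intervalIntegral.integral_smul_deriv_eq_deriv_smul hu hw hu'_int hw'.intervalIntegrable]
  calc _ ≤ ‖u b • w b‖ + ‖u a • w a‖ + ‖∫ ξ in a..b, u' ξ • w ξ‖ :=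
        (norm_sub_le _ _).trans (by gcongr; exact norm_sub_le _ _)
    _ ≤ |u b| + |u a| + (u b - u a) := by
        gcongr
        exacts [hboundary b right_mem_uIcc, hboundary a left_mem_uIcc]

theorem norm_integral_cexp_I_mul_le_of_le_abs_deriv (hab : a ≤ b) (hδ : 0 < δ)
    (hφ : ∀ ξ ∈ Icc a b, HasDerivAt φ (g ξ) ξ) (hg : ∀ ξ ∈ Icc a b, HasDerivAt g (g' ξ) ξ)
    (hg' : ∀ ξ ∈ Icc a b, 0 ≤ g' ξ) (hgδ : ∀ ξ ∈ Ioo a b, δ ≤ |g ξ|) :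
    ‖∫ ξ in a..b, exp (I * φ ξ)‖ ≤ 4 / δ := by
  rcases hab.eq_or_lt with rfl | hlt
  · simp only [intervalIntegral.integral_same, norm_zero]; positivity
  have hφc : ContinuousOn φ (Icc a b) := fun ξ hξ => (hφ ξ hξ).continuousAt.continuousWithinAt
  have hgc : ContinuousOn g (Icc a b) := fun ξ hξ => (hg ξ hξ).continuousAt.continuousWithinAt
  replace hgδ : ∀ ξ ∈ Icc a b, δ ≤ |g ξ| := by
    rw [← closure_Ioo hlt.ne] at hgc ⊢
    exact le_on_closure hgδ continuousOn_const hgc.abs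
  have hg0 : ∀ ξ ∈ Icc a b, g ξ ≠ 0 := fun ξ hξ h => by
    have := hgδ ξ hξ; rw [h, abs_zero] at this; linarith
  have hinv : ∀ ξ ∈ Icc a b, |-(g ξ)⁻¹| ≤ 1 / δ := fun ξ hξ => by
    rw [abs_neg, abs_inv, ← one_div]
    exact one_div_le_one_div_of_le hδ (hgδ ξ hξ)
  -- `e^{iφ} = u • (i e^{iφ})'` with `u = -1/φ'`, which is monotone and bounded by `1/δ`.
  have hibp := norm_integral_smul_deriv_le_of_deriv_nonneg (u := fun ξ => -(g ξ)⁻¹)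
    (u' := fun ξ => g' ξ / g ξ ^ 2) (w := fun ξ => I * exp (I * φ ξ))
    (w' := fun ξ => -g ξ • exp (I * φ ξ)) hab
    (fun ξ hξ => ((hg ξ hξ).inv (hg0 ξ hξ)).neg.congr_deriv (by ring))
    (fun ξ hξ => div_nonneg (hg' ξ hξ) (sq_nonneg _))
    (fun ξ hξ => ((((hφ ξ hξ).ofReal_comp).const_mul I).cexp.const_mul I).congr_deriv (by
      rw [real_smul]; push_cast; linear_combination (exp (I * φ ξ) * g ξ) * I_sq))
    (by fun_prop) (fun ξ _ => by rw [norm_mul, norm_I, norm_exp_I_mul_ofReal, one_mul])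
  calc ‖∫ ξ in a..b, exp (I * φ ξ)‖
      = ‖∫ ξ in a..b, -(g ξ)⁻¹ • -g ξ • exp (I * φ ξ)‖ := by
        congr 1
        refine intervalIntegral.integral_congr fun ξ hξ => ?_
        rw [uIcc_of_le hab] at hξ
        rw [smul_smul, neg_mul_neg, inv_mul_cancel₀ (hg0 ξ hξ), one_smul]
    _ ≤ 1 / δ + 1 / δ + (1 / δ + 1 / δ) := by
        refine hibp.trans (add_le_add (add_le_add (hinv b (right_mem_Icc.2 hab))
          (hinv a (left_mem_Icc.2 hab))) ?_)
        linarith [(abs_le.mp (hinv a (left_mem_Icc.2 hab))).1,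
          (abs_le.mp (hinv b (right_mem_Icc.2 hab))).2]
    _ = 4 / δ := by ring

theorem exists_sign_change_of_monotoneOn (hab : a ≤ b) (hgc : ContinuousOn g (Icc a b))
    (hgm : MonotoneOn g (Icc a b)) :
    ∃ ξ₀ ∈ Icc a b, (∀ ξ ∈ Icc a b, ξ < ξ₀ → g ξ ≤ 0) ∧ (∀ ξ ∈ Icc a b, ξ₀ < ξ → 0 ≤ g ξ) := by
  by_cases ha : 0 ≤ g a
  · exact ⟨a, left_mem_Icc.2 hab, fun ξ hξ h => absurd hξ.1 (not_le.2 h),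
      fun ξ hξ _ => ha.trans (hgm (left_mem_Icc.2 hab) hξ hξ.1)⟩
  by_cases hb : g b ≤ 0
  · exact ⟨b, right_mem_Icc.2 hab, fun ξ hξ _ => (hgm hξ (right_mem_Icc.2 hab) hξ.2).trans hb,
      fun ξ hξ h => absurd hξ.2 (not_le.2 h)⟩
  obtain ⟨ξ₀, hξ₀, h0⟩ := intermediate_value_Icc hab hgc ⟨(not_le.1 ha).le, (not_le.1 hb).le⟩
  exact ⟨ξ₀, hξ₀, fun ξ hξ h => h0 ▸ hgm hξ hξ₀ h.le, fun ξ hξ h => h0 ▸ hgm hξ₀ hξ h.le⟩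

theorem mul_le_abs_of_lt_abs_sub {ξ₀ ξ t : ℝ}
    (hgrowth : ∀ ξ ∈ Icc a b, ∀ η ∈ Icc a b, ξ ≤ η → μ * (η - ξ) ≤ g η - g ξ)
    (hξ₀ : ξ₀ ∈ Icc a b) (hleft : ∀ ξ ∈ Icc a b, ξ < ξ₀ → g ξ ≤ 0)
    (hright : ∀ ξ ∈ Icc a b, ξ₀ < ξ → 0 ≤ g ξ) (hξ : ξ ∈ Icc a b) (ht : 0 ≤ t)
    (hξt : t < |ξ - ξ₀|) : μ * t ≤ |g ξ| := by
  rcases lt_abs.1 hξt with h | h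
  · have hη : ξ - t ∈ Icc a b := ⟨by linarith [hξ₀.1], by linarith [hξ.2]⟩
    have := hgrowth _ hη ξ hξ (by linarith)
    rw [sub_sub_cancel] at this
    linarith [hright _ hη (by linarith), le_abs_self (g ξ)]
  · have hη : ξ + t ∈ Icc a b := ⟨by linarith [hξ.1], by linarith [hξ₀.2]⟩
    have := hgrowth ξ hξ _ hη (by linarith)
    rw [add_sub_cancel_left] at this
    linarith [hleft _ hη (by linarith), neg_abs_le (g ξ)]

theorem exists_split_Icc_around {ξ₀ r : ℝ} (hξ₀ : ξ₀ ∈ Icc a b) (hr : 0 ≤ r) :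
    ∃ c d, a ≤ c ∧ c ≤ d ∧ d ≤ b ∧ d - c ≤ 2 * r ∧
      (∀ ξ ∈ Ioo a c, r < |ξ - ξ₀|) ∧ ∀ ξ ∈ Ioo d b, r < |ξ - ξ₀| := by
  refine ⟨max a (ξ₀ - r), min b (ξ₀ + r), le_max_left _ _,
    max_le (le_min (hξ₀.1.trans hξ₀.2) (by linarith [hξ₀.1])) (le_min (by linarith [hξ₀.2])
      (by linarith)), min_le_left _ _, ?_, fun ξ hξ => lt_abs.2 (Or.inr ?_),
    fun ξ hξ => lt_abs.2 (Or.inl ?_)⟩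
  · linarith [min_le_right b (ξ₀ + r), le_max_right a (ξ₀ - r)]
  · linarith [(lt_max_iff.1 hξ.2).resolve_left hξ.1.not_gt]
  · linarith [(min_lt_iff.1 hξ.1).resolve_left hξ.2.not_gt]

theorem norm_integral_cexp_I_mul_le_of_le_deriv2 (hab : a ≤ b) (hμ : 0 < μ)
    (hφ : ∀ ξ ∈ Icc a b, HasDerivAt φ (g ξ) ξ) (hg : ∀ ξ ∈ Icc a b, HasDerivAt g (g' ξ) ξ)
    (hg' : ∀ ξ ∈ Icc a b, μ ≤ g' ξ) :
    ‖∫ ξ in a..b, exp (I * φ ξ)‖ ≤ 10 / √μ := by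
  set δ := √μ
  have hδ : 0 < δ := Real.sqrt_pos.2 hμ
  have hδ' : 0 < 1 / δ := one_div_pos.2 hδ
  have hμδ : μ * (1 / δ) = δ := by rw [mul_one_div, div_eq_iff hδ.ne', Real.mul_self_sqrt hμ.le]
  have hgc : ContinuousOn g (Icc a b) := fun ξ hξ => (hg ξ hξ).continuousAt.continuousWithinAt
  have hgrowth : ∀ ξ ∈ Icc a b, ∀ η ∈ Icc a b, ξ ≤ η → μ * (η - ξ) ≤ g η - g ξ :=
    (convex_Icc a b).mul_sub_le_image_sub_of_le_deriv hgc
      (fun ξ hξ => (hg ξ (interior_subset hξ)).differentiableAt.differentiableWithinAt)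
      (fun ξ hξ => (hg ξ (interior_subset hξ)).deriv ▸ hg' ξ (interior_subset hξ))
  obtain ⟨ξ₀, hξ₀, hleft, hright⟩ := exists_sign_change_of_monotoneOn hab hgc
    fun x hx y hy hxy => by nlinarith [hgrowth x hx y hy hxy]
  have hfar : ∀ x y, a ≤ x → x ≤ y → y ≤ b → (∀ ξ ∈ Ioo x y, 1 / δ < |ξ - ξ₀|) →
      ‖∫ ξ in x..y, exp (I * φ ξ)‖ ≤ 4 / δ := fun x y hax hxy hyb hfar => by
    have hsub : Icc x y ⊆ Icc a b := Icc_subset_Icc hax hyb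
    refine norm_integral_cexp_I_mul_le_of_le_abs_deriv hxy hδ (fun ξ hξ => hφ ξ (hsub hξ))
      (fun ξ hξ => hg ξ (hsub hξ)) (fun ξ hξ => hμ.le.trans (hg' ξ (hsub hξ))) fun ξ hξ => ?_
    rw [← hμδ]
    exact mul_le_abs_of_lt_abs_sub hgrowth hξ₀ hleft hright (hsub (Ioo_subset_Icc_self hξ))
      hδ'.le (hfar ξ hξ)
  -- Outside the `1/δ`-neighbourhood of the sign change of `φ'` we have `|φ'| ≥ μ/δ = δ`.
  obtain ⟨c, d, hac, hcd, hdb, hdc, hleft_far, hright_far⟩ := exists_split_Icc_around hξ₀ hδ'.le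
  have hint : ∀ {x y}, x ∈ Icc a b → y ∈ Icc a b →
      IntervalIntegrable (fun ξ => exp (I * φ ξ)) volume x y := fun hx hy =>
    ContinuousOn.intervalIntegrable fun ξ hξ => ((((hφ ξ (uIcc_subset_Icc hx hy hξ)).ofReal_comp
      ).const_mul I).cexp).continuousAt.continuousWithinAt
  have hmid : ‖∫ ξ in c..d, exp (I * φ ξ)‖ ≤ 2 / δ := calc
    _ ≤ 1 * |d - c| := intervalIntegral.norm_integral_le_of_norm_le_const fun ξ _ =>
        (norm_exp_I_mul_ofReal _).le
    _ ≤ 2 / δ := by rw [one_mul, abs_of_nonneg (sub_nonneg.2 hcd), ← mul_one_div]; exact hdc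
  have hcab : c ∈ Icc a b := ⟨hac, hcd.trans hdb⟩
  have hdab : d ∈ Icc a b := ⟨hac.trans hcd, hdb⟩
  rw [← intervalIntegral.integral_add_adjacent_intervals (hint (left_mem_Icc.2 hab) hcab)
    (hint hcab (right_mem_Icc.2 hab)), ← intervalIntegral.integral_add_adjacent_intervals
    (hint hcab hdab) (hint hdab (right_mem_Icc.2 hab))]
  calc _ ≤ ‖∫ ξ in a..c, exp (I * φ ξ)‖ + (‖∫ ξ in c..d, exp (I * φ ξ)‖
        + ‖∫ ξ in d..b, exp (I * φ ξ)‖) :=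
        (norm_add_le _ _).trans (by gcongr; exact norm_add_le _ _)
    _ ≤ 4 / δ + (2 / δ + 4 / δ) := by
        gcongr
        exacts [hfar a c le_rfl hac (hcd.trans hdb) hleft_far,
          hfar d b (hac.trans hcd) hdb le_rfl hright_far]
    _ = 10 / δ := by ring

end VanDerCorput

section Fourier

variable {E : Type*} [NormedAddCommGroup E] [NormedSpace ℂ E] {h : ℝ → E}

theorem integral_cexp_I_mul_smul_eq_fourier (h : ℝ → E) (l : ℝ) :
    ∫ ξ, exp (I * ((l * ξ : ℝ) : ℂ)) • h ξ = 𝓕 h (-(2 * Real.pi)⁻¹ * l) := by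
  rw [Real.fourier_real_eq_integral_exp_smul]
  congr 1; funext ξ; congr 2
  push_cast
  field_simp

theorem continuous_integral_cexp_I_mul_smul (hh : Integrable h) :
    Continuous fun l : ℝ => ∫ ξ, exp (I * ((l * ξ : ℝ) : ℂ)) • h ξ := by
  simp_rw [integral_cexp_I_mul_smul_eq_fourier]
  exact (VectorFourier.fourierIntegral_continuous Real.continuous_fourierChar
    (innerSL ℝ).continuous₂ hh).comp (continuous_const_mul _)

theorem tendsto_integral_cexp_I_mul_smul_cocompact (h : ℝ → E) :
    Tendsto (fun l : ℝ => ∫ ξ, exp (I * ((l * ξ : ℝ) : ℂ)) • h ξ) (cocompact ℝ) (𝓝 0) := by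
  simp_rw [integral_cexp_I_mul_smul_eq_fourier]
  exact (Real.zero_at_infty_fourier h).comp
    (Homeomorph.mulLeft₀ _ (by simp [Real.pi_ne_zero] : -(2 * Real.pi)⁻¹ ≠ 0)).map_cocompact.le

end Fourier

theorem exists_tendstoUniformly_of_dist_le {ι X E : Type*} [SemilatticeSup ι] [Nonempty ι]
    [MetricSpace E] [CompleteSpace E] {u : ι → X → E} {ε : ι → ℝ}
    (hε : Tendsto ε atTop (𝓝 0)) (hu : ∀ᶠ i in atTop, ∀ j ≥ i, ∀ x, dist (u i x) (u j x) ≤ ε i) :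
    ∃ F, TendstoUniformly u F atTop := by
  have hC : UniformCauchySeqOn u atTop univ := Metric.uniformCauchySeqOn_iff.2 fun e he => by
    obtain ⟨N, hN⟩ := eventually_atTop.1 (hu.and (hε.eventually (gt_mem_nhds (half_pos he))))
    refine ⟨N, fun m hm n hn x _ => ?_⟩
    calc dist (u m x) (u n x) ≤ dist (u N x) (u m x) + dist (u N x) (u n x) :=
          dist_triangle_left _ _ _
      _ ≤ ε N + ε N := add_le_add ((hN N le_rfl).1 m hm x) ((hN N le_rfl).1 n hn x)
      _ < e := by linarith [(hN N le_rfl).2]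
  choose F hF using fun x => cauchySeq_tendsto_of_complete (hC.cauchySeq (mem_univ x))
  exact ⟨F, tendstoUniformlyOn_univ.1 (hC.tendstoUniformlyOn_of_tendsto fun x _ => hF x)⟩

theorem norm_integral_cexp_I_mul_power_phase_le {α a b : ℝ} (hα : 1 ≤ α) (l : ℝ) (ha : 0 < a)
    (hab : a ≤ b) :
    ‖∫ ξ in a..b, exp (I * ((l * ξ + ξ ^ (α + 1) : ℝ) : ℂ))‖ ≤ 10 * a ^ (-((α - 1) / 2)) := by
  have hpos : ∀ ξ ∈ Icc a b, ξ ≠ 0 := fun ξ hξ => (ha.trans_le hξ.1).ne'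
  have hμ : 0 < a ^ (α - 1) := Real.rpow_pos_of_pos ha _
  refine (norm_integral_cexp_I_mul_le_of_le_deriv2 (g := fun ξ => l + (α + 1) * ξ ^ α)
    (g' := fun ξ => (α + 1) * (α * ξ ^ (α - 1))) hab hμ (fun ξ hξ => ?_) (fun ξ hξ => ?_)
    (fun ξ hξ => ?_)).trans_eq ?_
  · have := ((hasDerivAt_id' ξ).const_mul l).add
      (Real.hasDerivAt_rpow_const (p := α + 1) (Or.inl (hpos ξ hξ)))
    rwa [mul_one, add_sub_cancel_right] at this
  · exact ((Real.hasDerivAt_rpow_const (Or.inl (hpos ξ hξ))).const_mul (α + 1)).const_add l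
  · have : a ^ (α - 1) ≤ ξ ^ (α - 1) := Real.rpow_le_rpow ha.le hξ.1 (by linarith)
    have hξμ : 0 ≤ ξ ^ (α - 1) := hμ.le.trans this
    nlinarith [mul_nonneg (show 0 ≤ (α + 1) * α - 1 by nlinarith) hξμ]
  · rw [Real.sqrt_eq_rpow, ← Real.rpow_mul ha.le, Real.rpow_neg ha.le, div_eq_mul_inv]
    ring_nf

noncomputable def profileIntegrand (α l ξ : ℝ) : ℂ :=
  (Real.sign ξ : ℂ) * exp (-I * (Real.sign ξ : ℂ) * ((Real.pi / 4 : ℝ) : ℂ)) *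
    exp (I * ((l * ξ + ξ * |ξ| ^ α : ℝ) : ℂ))

section profileIntegrand

variable {α l ξ a b : ℝ}

theorem profileIntegrand_of_pos (hξ : 0 < ξ) :
    profileIntegrand α l ξ =
      exp (I * ((-(Real.pi / 4) : ℝ) : ℂ)) * exp (I * ((l * ξ + ξ ^ (α + 1) : ℝ) : ℂ)) := by
  rw [profileIntegrand, Real.sign_of_pos hξ, abs_of_pos hξ, Real.rpow_add_one hξ.ne', mul_comm ξ]
  push_cast
  ring_nf

theorem profileIntegrand_neg : profileIntegrand α l (-ξ) = -conj (profileIntegrand α l ξ) := by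
  simp only [profileIntegrand, Real.sign_neg, abs_neg, map_mul, ← exp_conj, conj_I, conj_ofReal,
    map_neg]
  push_cast
  ring_nf

theorem profileIntegrand_eq_exp_mul :
    profileIntegrand α l ξ = exp (I * ((l * ξ : ℝ) : ℂ)) * profileIntegrand α 0 ξ := by
  simp only [profileIntegrand, zero_mul, zero_add]
  push_cast
  rw [mul_add, exp_add]
  ring

theorem norm_profileIntegrand_le : ‖profileIntegrand α l ξ‖ ≤ 1 := by
  rw [profileIntegrand, norm_mul, norm_mul, norm_exp_I_mul_ofReal, mul_one,
    show -I * (Real.sign ξ : ℂ) * ((Real.pi / 4 : ℝ) : ℂ) =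
      I * ((-(Real.sign ξ * (Real.pi / 4)) : ℝ) : ℂ) by push_cast; ring,
    norm_exp_I_mul_ofReal, mul_one]
  rcases Real.sign_apply_eq ξ with h | h | h <;> simp [h]

theorem measurable_profileIntegrand : Measurable (profileIntegrand α l) := by
  have hsign : Measurable Real.sign := Monotone.measurable fun x y hxy => by
    unfold Real.sign; split_ifs <;> linarith
  unfold profileIntegrand
  fun_prop

theorem norm_integral_profileIntegrand_le (hα : 1 ≤ α) (ha : 0 < a) (hab : a ≤ b) :
    ‖∫ ξ in a..b, profileIntegrand α l ξ‖ ≤ 10 * a ^ (-((α - 1) / 2)) := by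
  rw [intervalIntegral.integral_congr fun ξ hξ =>
      profileIntegrand_of_pos (ha.trans_le (uIcc_of_le hab ▸ hξ).1),
    intervalIntegral.integral_const_mul, norm_mul, norm_exp_I_mul_ofReal, one_mul]
  exact norm_integral_cexp_I_mul_power_phase_le hα l ha hab

theorem integral_profileIntegrand_neg (a b : ℝ) :
    ∫ ξ in -b..-a, profileIntegrand α l ξ = -conj (∫ ξ in a..b, profileIntegrand α l ξ) := by
  rw [← intervalIntegral.integral_comp_neg]
  simp_rw [profileIntegrand_neg]
  rw [intervalIntegral.integral_neg, intervalIntegral.intervalIntegral_conj]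

theorem intervalIntegrable_profileIntegrand :
    IntervalIntegrable (profileIntegrand α l) volume a b :=
  have hIoc : ∀ a b, IntegrableOn (profileIntegrand α l) (Ioc a b) := fun _ _ =>
    IntegrableOn.of_bound measure_Ioc_lt_top measurable_profileIntegrand.aestronglyMeasurable 1
      (ae_of_all _ fun _ => norm_profileIntegrand_le)
  ⟨hIoc a b, hIoc b a⟩

end profileIntegrand

noncomputable def truncatedProfile (α R l : ℝ) : ℂ := ∫ ξ in (-R)..R, profileIntegrand α l ξ

section truncatedProfile

variable {α R R' : ℝ}

theorem norm_truncatedProfile_sub_le (hα : 1 ≤ α) (hR : 0 < R) (hRR' : R ≤ R') (l : ℝ) :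
    ‖truncatedProfile α R' l - truncatedProfile α R l‖ ≤ 20 * R ^ (-((α - 1) / 2)) := by
  have hsplit : truncatedProfile α R' l - truncatedProfile α R l =
      (∫ ξ in -R'..-R, profileIntegrand α l ξ) + ∫ ξ in R..R', profileIntegrand α l ξ := by
    simp only [truncatedProfile]
    rw [← intervalIntegral.integral_add_adjacent_intervals (b := -R)
      intervalIntegrable_profileIntegrand intervalIntegrable_profileIntegrand,
      ← intervalIntegral.integral_add_adjacent_intervals (a := -R) (b := R)
      intervalIntegrable_profileIntegrand intervalIntegrable_profileIntegrand]
    ring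
  have htail := norm_integral_profileIntegrand_le (l := l) hα hR hRR'
  rw [hsplit, integral_profileIntegrand_neg]
  calc _ ≤ ‖-conj (∫ ξ in R..R', profileIntegrand α l ξ)‖
        + ‖∫ ξ in R..R', profileIntegrand α l ξ‖ := norm_add_le _ _
    _ ≤ 10 * R ^ (-((α - 1) / 2)) + 10 * R ^ (-((α - 1) / 2)) := by
        rw [norm_neg, RCLike.norm_conj]
        exact add_le_add htail htail
    _ = 20 * R ^ (-((α - 1) / 2)) := by ring

theorem truncatedProfile_eq_integral (hR : 0 ≤ R) (l : ℝ) :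
    truncatedProfile α R l =
      ∫ ξ, exp (I * ((l * ξ : ℝ) : ℂ)) • (Ioc (-R) R).indicator (profileIntegrand α 0) ξ := by
  rw [truncatedProfile, intervalIntegral.integral_of_le (by linarith),
    ← integral_indicator measurableSet_Ioc]
  have : profileIntegrand α l = fun ξ => exp (I * ((l * ξ : ℝ) : ℂ)) • profileIntegrand α 0 ξ :=
    funext fun _ => profileIntegrand_eq_exp_mul
  simp_rw [this, Set.indicator_smul_apply]

theorem continuous_truncatedProfile (hR : 0 ≤ R) : Continuous (truncatedProfile α R) := by
  simp_rw [funext (truncatedProfile_eq_integral hR)]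
  exact continuous_integral_cexp_I_mul_smul
    ((integrable_indicator_iff measurableSet_Ioc).2 intervalIntegrable_profileIntegrand.1)

theorem tendsto_truncatedProfile_cocompact (hR : 0 ≤ R) :
    Tendsto (truncatedProfile α R) (cocompact ℝ) (𝓝 0) := by
  simp_rw [funext (truncatedProfile_eq_integral hR)]
  exact tendsto_integral_cexp_I_mul_smul_cocompact _

end truncatedProfile

theorem threeD_profile_exists_continuous_decay (α : ℝ) (hα : 1 < α) :
    ∃ F₃ : ℝ → ℂ,
      (∀ l : ℝ,
        Tendsto
          (fun R : ℝ => ∫ ξ in (-R)..R,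
            (Real.sign ξ : ℂ) *
              Complex.exp (-Complex.I * (Real.sign ξ : ℂ) * ((Real.pi / 4 : ℝ) : ℂ)) *
              Complex.exp (Complex.I * ((l * ξ + ξ * |ξ| ^ α : ℝ) : ℂ)))
          atTop (nhds (F₃ l))) ∧
      Continuous F₃ ∧
      Tendsto F₃ (cocompact ℝ) (nhds 0) := by
  have hε : Tendsto (fun R : ℝ => 20 * R ^ (-((α - 1) / 2))) atTop (𝓝 0) := by
    simpa using (tendsto_rpow_neg_atTop (by linarith : 0 < (α - 1) / 2)).const_mul 20
  obtain ⟨F₃, hF₃⟩ := exists_tendstoUniformly_of_dist_le (u := truncatedProfile α) hε <|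
    (eventually_gt_atTop 0).mono fun R hR R' hRR' l => by
      rw [dist_comm, dist_eq_norm]
      exact norm_truncatedProfile_sub_le hα.le hR hRR' l
  have hR : ∀ᶠ R : ℝ in atTop, 0 ≤ R := eventually_ge_atTop 0
  exact ⟨F₃, hF₃.tendsto_at,
    hF₃.continuous (hR.mono fun R => continuous_truncatedProfile).frequently,
    hF₃.tendsto_of_eventually_tendsto (hR.mono fun R => tendsto_truncatedProfile_cocompact)
      tendsto_const_nhds⟩
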